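/- Let C_n denote the number of steady words of length n with i-th letter chosen from a given alphabet A_i of size 7, and let F_{n+1} denote the number of words of length n+1 (with letters from the respective alphabets) that are not steady but whose length-n prefix is steady. Then F_{n+1} ≤ 2C_n + 2C_{n-1} + Σ_{i≥0} (3+8i) C_{n-2-i}. -/

import Mathlib

/-!
Let `W` have length `n + 1`, a steady prefix `P` of length `n`, and not be steady. If `W` is not
square-free, its square is a suffix and is `c c`: a longer square suffix `Y c Y c` leaves `Y c Y`
in `P`, and deleting that `c` from `P` would create `Y Y`. Otherwise deleting some position
`i < n` creates a square suffix of half-length `k` covering position `i`; take `k` minimal, then `i`.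
The second half of that square copies the first, so `W` is recovered from its (steady) prefix of
length `n + 1 - k`, the position `i` and the letter `W[i]`. The positions `i = n - 1` (again
`Y c Y` in `P`) and `i = n - 2k + 1` (an erasure square of half-length `k - 1`) cannot occur; for
`i ≤ n - k` the letter `W[i]` lies in the prefix, and for `i = n - k + 1` it is enough to keep the
prefix of length `n + 2 - k`. This gives at most `(k - 1 + 7 (k - 3)) C_{n+1-k} + C_{n+2-k}` words
for each `k ≥ 2`, and `C_n` each for `k = 1` and for non-square-free `W`.
-/

/-- A word is square-free if it contains no nonempty factor of the form `X ++ X`. -/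
def SquareFree {α : Type*} (W : List α) : Prop :=
  ∀ X : List α, X ≠ [] → ¬ (X ++ X) <:+: W

/-- A square-free word is steady if deleting any single letter leaves it square-free. -/
def Steady {α : Type*} (W : List α) : Prop :=
  SquareFree W ∧ ∀ i < W.length, SquareFree (W.eraseIdx i)

section Words

variable {α : Type*}

theorem List.IsInfix.isSuffix_or_isInfix_dropLast {l V : List α} (h : l <:+: V) :
    l <:+ V ∨ l <:+: V.dropLast := by
  obtain ⟨s, t, rfl⟩ := h
  rcases List.eq_nil_or_concat t with rfl | ⟨t', c, rfl⟩
  · exact .inl ⟨s, by simp⟩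
  · exact .inr ⟨s, t', by simp [← List.append_assoc]⟩

theorem List.getElem?_eq_of_take_eq {l l' : List α} {m p : ℕ} (h : l.take m = l'.take m)
    (hp : p < m) : l[p]? = l'[p]? := by
  rw [← List.getElem?_take_of_lt hp, h, List.getElem?_take_of_lt hp]

theorem List.take_eraseIdx_eq_eraseIdx_take {l : List α} {i m : ℕ} (hi : i < m) :
    (l.eraseIdx i).take (m - 1) = (l.take m).eraseIdx i :=
  List.ext_getElem? fun p => by
    simp only [List.getElem?_take, List.getElem?_eraseIdx]
    split_ifs <;> first | rfl | omega

theorem List.take_eraseIdx_eq_of_take_eq {l l' : List α} {i m : ℕ}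
    (h : l.take (m + 1) = l'.take (m + 1)) : (l.eraseIdx i).take m = (l'.eraseIdx i).take m :=
  List.ext_getElem? fun p => by
    simp only [List.getElem?_take, List.getElem?_eraseIdx]
    split_ifs <;> first | rfl | exact List.getElem?_eq_of_take_eq h (by omega)

theorem List.eq_of_eraseIdx_eq {l l' : List α} {i : ℕ} (h : l.eraseIdx i = l'.eraseIdx i)
    (hi : l[i]? = l'[i]?) : l = l' := by
  refine List.ext_getElem? fun p => ?_
  rcases lt_trichotomy p i with hp | rfl | hp
  · simpa [List.getElem?_eraseIdx_of_lt hp] using congrArg (·[p]?) h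
  · exact hi
  · obtain ⟨q, rfl⟩ := Nat.exists_eq_add_of_lt hp
    simpa [List.getElem?_eraseIdx_of_ge (by omega : i ≤ i + q)] using congrArg (·[i + q]?) h

theorem SquareFree.of_infix {V W : List α} (h : SquareFree W) (hV : V <:+: W) : SquareFree V :=
  fun X hX hXV => h X hX (hXV.trans hV)

theorem Steady.take {W : List α} (h : Steady W) (m : ℕ) : Steady (W.take m) := by
  refine ⟨h.1.of_infix (List.take_prefix m W).isInfix, fun i hi => ?_⟩
  rw [List.length_take] at hi
  rw [← List.take_eraseIdx_eq_eraseIdx_take (by omega : i < m)]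
  exact (h.2 i (by omega)).of_infix (List.take_prefix _ _).isInfix

/-- Out of range both sides are `none`: this is a square factor of `V` only when
`a + 2 * k ≤ V.length`. -/
def IsSquareAt (V : List α) (a k : ℕ) : Prop :=
  ∀ j < k, V[a + j]? = V[a + k + j]?

/-- Positions `a, …, a + 2k` of `V` form a word `Y c Y` with `|Y| = k`. -/
def IsGappedSquareAt (V : List α) (a k : ℕ) : Prop :=
  ∀ j < k, V[a + j]? = V[a + k + 1 + j]?

theorem IsSquareAt.not_squareFree {V : List α} {a k : ℕ} (hV : IsSquareAt V a k) (hk : k ≠ 0)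
    (hlen : a + 2 * k ≤ V.length) : ¬ SquareFree V := by
  intro hsf
  set X := (V.drop a).take k
  have hX : X ≠ [] := List.ne_nil_of_length_pos (by rw [List.length_take, List.length_drop]; omega)
  have hsecond : (V.drop (a + k)).take k = X := List.ext_getElem? fun j => by
    simp only [X, List.getElem?_take, List.getElem?_drop]
    split_ifs with hj
    · exact (hV j hj).symm
    · rfl
  have hXX : X ++ X = (V.drop a).take (2 * k) := by
    rw [two_mul, List.take_add, List.drop_drop, hsecond]
  exact hsf X hX (hXX ▸ (List.take_prefix _ _).isInfix.trans (List.drop_suffix _ _).isInfix)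

theorem isSquareAt_of_suffix {V X : List α} (h : X ++ X <:+ V) :
    IsSquareAt V (V.length - 2 * X.length) X.length := by
  obtain ⟨u, rfl⟩ := h
  intro j hj
  have hlen : (u ++ (X ++ X)).length - 2 * X.length = u.length := by
    rw [List.length_append, List.length_append]
    omega
  rw [hlen]
  simp only [List.getElem?_append]
  split_ifs <;> first | omega | (congr 1; omega)

theorem exists_isSquareAt_of_not_squareFree {V : List α} (h : ¬ SquareFree V)
    (hV : SquareFree V.dropLast) :
    ∃ k, 0 < k ∧ 2 * k ≤ V.length ∧ IsSquareAt V (V.length - 2 * k) k := by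
  simp only [SquareFree, not_forall, not_not] at h
  obtain ⟨X, hX, hXX⟩ := h
  rcases hXX.isSuffix_or_isInfix_dropLast with hsuf | hinf
  · refine ⟨X.length, List.length_pos_iff.mpr hX, ?_, isSquareAt_of_suffix hsuf⟩
    simpa [two_mul] using hsuf.length_le
  · exact absurd hinf (hV X hX)

theorem IsGappedSquareAt.isSquareAt_eraseIdx {V : List α} {a k : ℕ}
    (h : IsGappedSquareAt V a k) : IsSquareAt (V.eraseIdx (a + k)) a k := by
  intro j hj
  rw [List.getElem?_eraseIdx_of_lt (by omega), List.getElem?_eraseIdx_of_ge (by omega), h j hj]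
  congr 1
  omega

theorem Steady.not_isGappedSquareAt {V : List α} {a k : ℕ} (hV : Steady V) (hk : k ≠ 0)
    (hlen : a + 2 * k + 1 ≤ V.length) : ¬ IsGappedSquareAt V a k := fun h =>
  h.isSquareAt_eraseIdx.not_squareFree hk
    (by rw [List.length_eraseIdx_of_lt (by omega)]; omega) (hV.2 _ (by omega))

theorem IsSquareAt.eq_of_take_eq {V V' : List α} {a k : ℕ} (hV : IsSquareAt V a k)
    (hV' : IsSquareAt V' a k) (hl : V.length = a + 2 * k) (hl' : V'.length = a + 2 * k)
    (h : V.take (a + k) = V'.take (a + k)) : V = V' := by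
  refine List.ext_getElem? fun p => ?_
  rcases lt_or_ge p (a + k) with hp | hp
  · exact List.getElem?_eq_of_take_eq h hp
  rcases lt_or_ge p (a + 2 * k) with hp' | hp'
  · obtain ⟨j, rfl⟩ := Nat.exists_eq_add_of_le hp
    rw [← hV j (by omega), ← hV' j (by omega)]
    exact List.getElem?_eq_of_take_eq h (by omega)
  · rw [List.getElem?_eq_none (by omega), List.getElem?_eq_none (by omega)]

/-- Deleting position `i < n` of a word of length `n + 1` leaves a square suffix with halves of
length `k`; `n < i + 2 * k` says that this square is not already a factor of the word. -/
def ErasureSquare (n : ℕ) (W : List α) (k i : ℕ) : Prop :=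
  0 < k ∧ 2 * k ≤ n ∧ i < n ∧ n < i + 2 * k ∧ IsSquareAt (W.eraseIdx i) (n - 2 * k) k

section Failure

variable {n k i : ℕ} {W : List α}

theorem isSquareAt_last_of_not_squareFree (hl : W.length = n + 1) (hP : Steady (W.take n))
    (h : ¬ SquareFree W) : 0 < n ∧ IsSquareAt W (n - 1) 1 := by
  have hdrop : W.dropLast = W.take n := by rw [List.dropLast_eq_take, hl]; rfl
  obtain ⟨k, hk, hkn, hsq⟩ := exists_isSquareAt_of_not_squareFree h (hdrop ▸ hP.1)
  rw [hl] at hkn hsq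
  obtain rfl | hk2 : k = 1 ∨ 2 ≤ k := by omega
  · exact ⟨by omega, by simpa [show n + 1 - 2 * 1 = n - 1 by omega] using hsq⟩
  -- a longer square suffix `Y c Y c` leaves `Y c Y` in the prefix
  refine absurd (fun j hj => ?_) (hP.not_isGappedSquareAt (a := n + 1 - 2 * k) (k := k - 1)
    (by omega) (by rw [List.length_take]; omega))
  rw [List.getElem?_take_of_lt (by omega), List.getElem?_take_of_lt (by omega), hsq j (by omega)]
  congr 1
  omega

theorem exists_erasureSquare (hl : W.length = n + 1) (hP : Steady (W.take n))
    (hsf : SquareFree W) (hns : ¬ Steady W) : ∃ k i, ErasureSquare n W k i := by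
  simp only [Steady, hsf, true_and, not_forall] at hns
  obtain ⟨i, hi, hbad⟩ := hns
  have hin : i < n := by
    refine lt_of_le_of_ne (by omega) fun hin => hbad ?_
    rw [← List.dropLast_eq_eraseIdx (by omega), List.dropLast_eq_take, hl]
    exact hP.1
  have hVl : (W.eraseIdx i).length = n := by rw [List.length_eraseIdx_of_lt hi]; omega
  have hdrop : (W.eraseIdx i).dropLast = (W.take n).eraseIdx i := by
    rw [List.dropLast_eq_take, hVl, List.take_eraseIdx_eq_eraseIdx_take hin]
  obtain ⟨k, hk, hkn, hsq⟩ :=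
    exists_isSquareAt_of_not_squareFree hbad (hdrop ▸ hP.2 i (by rw [List.length_take]; omega))
  rw [hVl] at hkn hsq
  refine ⟨k, i, hk, hkn, hin, ?_, hsq⟩
  by_contra! hle
  -- otherwise the square lies to the right of position `i` and is already a square of `W`
  refine (show IsSquareAt W (n - 2 * k + 1) k from fun j hj => ?_).not_squareFree hk.ne'
    (by omega) hsf
  have := hsq j hj
  rw [List.getElem?_eraseIdx_of_ge (by omega), List.getElem?_eraseIdx_of_ge (by omega)] at this
  convert this using 2 <;> omega

theorem ErasureSquare.ne_sub_one (hw : ErasureSquare n W k i) (hl : W.length = n + 1)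
    (hP : Steady (W.take n)) (hk : 2 ≤ k) : i ≠ n - 1 := by
  rintro rfl
  obtain ⟨-, hkn, -, -, hsq⟩ := hw
  -- the square `Y c Y c` of `W.eraseIdx (n - 1)` leaves `Y c Y` in `W.take n`
  refine hP.not_isGappedSquareAt (a := n - 2 * k) (k := k - 1) (by omega)
    (by rw [List.length_take]; omega)
    fun j hj => ?_
  have := hsq j (by omega)
  rw [List.getElem?_eraseIdx_of_lt (by omega), List.getElem?_eraseIdx_of_lt (by omega)] at this
  rw [List.getElem?_take_of_lt (by omega), List.getElem?_take_of_lt (by omega), this]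
  congr 1
  omega

theorem ErasureSquare.pred (hw : ErasureSquare n W k (n - 2 * k + 1)) (hk : 2 ≤ k) :
    ErasureSquare n W (k - 1) (n - k + 1) := by
  obtain ⟨-, hkn, -, -, hsq⟩ := hw
  -- around the square `(x Z) (x Z)` of `W.eraseIdx (n - 2k + 1)`, `W` reads `x d Z x Z`
  have hgap : IsGappedSquareAt W (n - 2 * (k - 1)) (k - 1) := fun j hj => by
    have := hsq (j + 1) (by omega)
    rw [List.getElem?_eraseIdx_of_ge (by omega), List.getElem?_eraseIdx_of_ge (by omega)] at this
    convert this using 2 <;> omega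
  refine ⟨by omega, by omega, by omega, by omega, ?_⟩
  convert hgap.isSquareAt_eraseIdx using 2
  omega

theorem ErasureSquare.eq_of_take_eq {W' : List α} (hw : ErasureSquare n W k i)
    (hw' : ErasureSquare n W' k i) (hl : W.length = n + 1) (hl' : W'.length = n + 1)
    (ht : W.take (n + 1 - k) = W'.take (n + 1 - k)) (hi : W[i]? = W'[i]?) : W = W' := by
  obtain ⟨-, hkn, hin, -, hsq⟩ := hw
  have hlen {V : List α} (hV : V.length = n + 1) : (V.eraseIdx i).length = n - 2 * k + 2 * k := by
    rw [List.length_eraseIdx_of_lt (by omega)]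
    omega
  refine List.eq_of_eraseIdx_eq (hsq.eq_of_take_eq hw'.2.2.2.2 (hlen hl) (hlen hl') ?_) hi
  rw [show n - 2 * k + k = n - k by omega]
  exact List.take_eraseIdx_eq_of_take_eq (by rwa [show n - k + 1 = n + 1 - k by omega])

end Failure

theorem Set.ncard_le_card_mul_ncard {β γ δ : Type*} {S : Set β} {T : Set γ} {I : Finset δ}
    (tag : β → δ) (f : β → γ) (htag : ∀ x ∈ S, tag x ∈ I) (hf : Set.MapsTo f S T)
    (hinj : ∀ x ∈ S, ∀ y ∈ S, tag x = tag y → f x = f y → x = y) (hT : T.Finite) :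
    S.ncard ≤ I.card * T.ncard := by
  rw [← Set.ncard_coe_finset, ← Set.ncard_prod]
  refine Set.ncard_le_ncard_of_injOn (fun x => (tag x, f x)) (fun x hx => ⟨htag x hx, hf hx⟩)
    (fun x hx y hy hxy => ?_) (I.finite_toSet.prod hT)
  exact hinj x hx y hy (congrArg Prod.fst hxy) (congrArg Prod.snd hxy)

theorem finite_setOf_length_eq_getElem_mem (A : ℕ → Finset α) (m : ℕ) :
    {W : List α | W.length = m ∧ ∀ i, (h : i < W.length) → W[i] ∈ A i}.Finite := by
  refine ((Set.Finite.pi fun i : Fin m => (A i).finite_toSet).image List.ofFn).subset ?_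
  rintro W ⟨rfl, hW⟩
  exact ⟨fun i => W[i], fun i _ => hW i i.2, List.ofFn_getElem⟩

noncomputable def minSquareHalf (n : ℕ) (W : List α) : ℕ :=
  sInf {k | ∃ i, ErasureSquare n W k i}

noncomputable def minErasedPos (n : ℕ) (W : List α) : ℕ :=
  sInf {i | ErasureSquare n W (minSquareHalf n W) i}

theorem erasureSquare_minSquareHalf {n : ℕ} {W : List α} (h : ∃ k i, ErasureSquare n W k i) :
    ErasureSquare n W (minSquareHalf n W) (minErasedPos n W) :=
  Nat.sInf_mem (Nat.sInf_mem h)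

/-- Erased positions `i ≤ n - k` (`k - 1` of them, letter in the prefix of length `n + 1 - k`),
`n - k + 2 ≤ i ≤ n - 2` (`k - 3` of them, `q` letters each), and `i = n - k + 1` (prefix of length
`n + 2 - k`, impossible for `k = 2`). -/
def halfBound (q : ℕ) (C : ℕ → ℕ) (n k : ℕ) : ℕ :=
  (k - 1 + q * (k - 3)) * C (n + 1 - k) + if 3 ≤ k then C (n + 2 - k) else 0

section Counting

variable (A : ℕ → Finset α) {n k : ℕ} {W : List α}

def steadyWords (m : ℕ) : Set (List α) :=
  {W | W.length = m ∧ Steady W ∧ ∀ i, (h : i < W.length) → W[i] ∈ A i}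

def failures (n : ℕ) : Set (List α) :=
  {W | W.length = n + 1 ∧ (∀ i, (h : i < W.length) → W[i] ∈ A i) ∧ ¬ Steady W ∧
    Steady (W.take n)}

def squareFailures (n : ℕ) : Set (List α) := {W ∈ failures A n | ¬ SquareFree W}

def halfFailures (n k : ℕ) : Set (List α) :=
  {W ∈ failures A n | SquareFree W ∧ minSquareHalf n W = k}

theorem steadyWords_finite (m : ℕ) : (steadyWords A m).Finite :=
  (finite_setOf_length_eq_getElem_mem A m).subset fun _ hW => ⟨hW.1, hW.2.2⟩

theorem failures_finite (n : ℕ) : (failures A n).Finite :=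
  (finite_setOf_length_eq_getElem_mem A (n + 1)).subset fun _ hW => ⟨hW.1, hW.2.1⟩

theorem take_mem_steadyWords {m : ℕ} (hW : W ∈ failures A n) (hm : m ≤ n) :
    W.take m ∈ steadyWords A m := by
  obtain ⟨hl, hA, -, hP⟩ := hW
  refine ⟨by rw [List.length_take]; omega, by simpa [List.take_take, min_eq_left hm] using hP.take m,
    fun i hi => ?_⟩
  rw [List.getElem_take]
  exact hA i _

theorem failures_subset :
    failures A n ⊆ squareFailures A n ∪ halfFailures A n 1 ∪
      ⋃ k ∈ Finset.Icc 2 (n / 2), halfFailures A n k := by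
  intro W hW
  by_cases hsf : SquareFree W
  · have ⟨hl, _, hns, hP⟩ := hW
    obtain ⟨hk, hkn, -⟩ := erasureSquare_minSquareHalf (exists_erasureSquare hl hP hsf hns)
    obtain hk1 | hk2 : minSquareHalf n W = 1 ∨ 2 ≤ minSquareHalf n W := by omega
    · exact .inl (.inr ⟨hW, hsf, hk1⟩)
    · refine .inr (Set.mem_biUnion (x := minSquareHalf n W) ?_ ⟨hW, hsf, rfl⟩)
      simp only [Finset.coe_Icc, Set.mem_Icc]
      omega
  · exact .inl (.inl ⟨hW, hsf⟩)

theorem erasureSquare_of_mem_halfFailures (hW : W ∈ halfFailures A n k) :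
    ErasureSquare n W k (minErasedPos n W) := by
  obtain ⟨⟨hl, -, hns, hP⟩, hsf, rfl⟩ := hW
  exact erasureSquare_minSquareHalf (exists_erasureSquare hl hP hsf hns)

theorem minErasedPos_range_of_mem_halfFailures (hW : W ∈ halfFailures A n k) (hk : 2 ≤ k) :
    2 * k ≤ n ∧ n + 2 ≤ minErasedPos n W + 2 * k ∧ minErasedPos n W + 2 ≤ n := by
  have hw := erasureSquare_of_mem_halfFailures A hW
  have hne := hw.ne_sub_one hW.1.1 hW.1.2.2.2 hk
  have hne' : minErasedPos n W ≠ n - 2 * k + 1 := fun hi => by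
    have hmin : minSquareHalf n W ≤ k - 1 := Nat.sInf_le ⟨_, (hi ▸ hw).pred hk⟩
    have hhalf : minSquareHalf n W = k := hW.2.2
    omega
  obtain ⟨-, hkn, hin, hni, -⟩ := hw
  omega

theorem eq_of_mem_halfFailures {W' : List α} (hW : W ∈ halfFailures A n k)
    (hW' : W' ∈ halfFailures A n k) (hi : minErasedPos n W = minErasedPos n W')
    (ht : W.take (n + 1 - k) = W'.take (n + 1 - k))
    (hget : W[minErasedPos n W]? = W'[minErasedPos n W]?) : W = W' :=
  (erasureSquare_of_mem_halfFailures A hW).eq_of_take_eq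
    (hi ▸ erasureSquare_of_mem_halfFailures A hW') hW.1.1 hW'.1.1 ht hget

theorem ncard_squareFailures_le : (squareFailures A n).ncard ≤ (steadyWords A n).ncard := by
  refine Set.ncard_le_ncard_of_injOn (·.take n) (fun W hW => take_mem_steadyWords A hW.1 le_rfl)
    ?_ (steadyWords_finite A n)
  rintro W ⟨⟨hl, -, -, hP⟩, hsq⟩ W' ⟨⟨hl', -, -, hP'⟩, hsq'⟩ ht
  obtain ⟨hn, hW⟩ := isSquareAt_last_of_not_squareFree hl hP hsq
  obtain ⟨-, hW'⟩ := isSquareAt_last_of_not_squareFree hl' hP' hsq'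
  exact hW.eq_of_take_eq hW' (by omega) (by omega) (by rwa [Nat.sub_add_cancel hn])

theorem ncard_halfFailures_one_le : (halfFailures A n 1).ncard ≤ (steadyWords A n).ncard := by
  refine Set.ncard_le_ncard_of_injOn (·.take n) (fun W hW => take_mem_steadyWords A hW.1 le_rfl)
    (fun W hW W' hW' ht => ?_) (steadyWords_finite A n)
  have hi {V : List α} (hV : V ∈ halfFailures A n 1) : minErasedPos n V = n - 1 := by
    obtain ⟨-, -, hin, hni, -⟩ := erasureSquare_of_mem_halfFailures A hV
    omega
  exact eq_of_mem_halfFailures A hW hW' (by rw [hi hW, hi hW']) (by simpa using ht)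
    (List.getElem?_eq_of_take_eq ht (erasureSquare_of_mem_halfFailures A hW).2.2.1)

theorem ncard_sep_minErasedPos_le (hk : 2 ≤ k) :
    {W ∈ halfFailures A n k | minErasedPos n W ≤ n - k}.ncard ≤
      (k - 1) * (steadyWords A (n + 1 - k)).ncard := by
  refine (Set.ncard_le_card_mul_ncard (I := Finset.Icc (n + 2 - 2 * k) (n - k))
    (minErasedPos n) (·.take (n + 1 - k)) (fun W hW => ?_)
    (fun W hW => take_mem_steadyWords A hW.1.1 (by omega)) (fun W hW W' hW' hi ht => ?_)
    (steadyWords_finite A _)).trans (Nat.mul_le_mul_right _ (by rw [Nat.card_Icc]; omega))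
  · have hrange := minErasedPos_range_of_mem_halfFailures A hW.1 hk
    have hle := hW.2
    simp only [Finset.mem_Icc]
    omega
  · have hrange := minErasedPos_range_of_mem_halfFailures A hW.1 hk
    have hle := hW.2
    exact eq_of_mem_halfFailures A hW.1 hW'.1 hi ht (List.getElem?_eq_of_take_eq ht (by omega))

theorem ncard_sep_lt_minErasedPos {q : ℕ} (hq : ∀ i, (A i).card ≤ q) (hk : 2 ≤ k) :
    {W ∈ halfFailures A n k | n - k + 1 < minErasedPos n W}.ncard ≤
      q * (k - 3) * (steadyWords A (n + 1 - k)).ncard := by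
  classical
  set I := (Finset.Icc (n - k + 2) (n - 2)).biUnion fun i => (A i).image fun a => (i, some a)
  have hI : I.card ≤ q * (k - 3) := calc
    I.card ≤ ∑ i ∈ Finset.Icc (n - k + 2) (n - 2), q :=
      Finset.card_biUnion_le.trans (Finset.sum_le_sum fun i _ => Finset.card_image_le.trans (hq i))
    _ ≤ q * (k - 3) := by
      rw [Finset.sum_const, smul_eq_mul, Nat.card_Icc, mul_comm]
      exact Nat.mul_le_mul_left q (by omega)
  refine (Set.ncard_le_card_mul_ncard (I := I) (fun W => (minErasedPos n W, W[minErasedPos n W]?))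
    (·.take (n + 1 - k)) (fun W hW => ?_)
    (fun W hW => take_mem_steadyWords A hW.1.1 (by omega)) (fun W hW W' hW' htag ht => ?_)
    (steadyWords_finite A _)).trans (Nat.mul_le_mul_right _ hI)
  · have hrange := minErasedPos_range_of_mem_halfFailures A hW.1 hk
    have hlt := hW.2
    have hl : W.length = n + 1 := hW.1.1.1
    simp only [I, Finset.mem_biUnion, Finset.mem_Icc, Finset.mem_image]
    exact ⟨_, ⟨by omega, by omega⟩, W[minErasedPos n W]'(by omega), hW.1.1.2.1 _ _, by simp⟩
  · obtain ⟨hi, hget⟩ := Prod.mk.inj htag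
    exact eq_of_mem_halfFailures A hW.1 hW'.1 hi ht (hget.trans (by rw [hi]))

theorem ncard_sep_minErasedPos_eq (hk : 2 ≤ k) :
    {W ∈ halfFailures A n k | minErasedPos n W = n - k + 1}.ncard ≤
      if 3 ≤ k then (steadyWords A (n + 2 - k)).ncard else 0 := by
  split_ifs with hk3
  · refine Set.ncard_le_ncard_of_injOn (·.take (n + 2 - k))
      (fun W hW => take_mem_steadyWords A hW.1.1 (by omega)) (fun W hW W' hW' ht => ?_)
      (steadyWords_finite A _)
    have hrange := minErasedPos_range_of_mem_halfFailures A hW.1 hk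
    have hi : minErasedPos n W = n - k + 1 := hW.2
    refine eq_of_mem_halfFailures A hW.1 hW'.1 (hi.trans hW'.2.symm) ?_
      (List.getElem?_eq_of_take_eq ht (by omega))
    simpa [List.take_take, show n + 1 - k ≤ n + 2 - k by omega] using
      congrArg (·.take (n + 1 - k)) ht
  · refine (Set.ncard_le_ncard (t := ∅) fun W hW => absurd hW.2 ?_).trans_eq (Set.ncard_empty _)
    have hrange := minErasedPos_range_of_mem_halfFailures A hW.1 hk
    omega

theorem ncard_halfFailures_le {q : ℕ} (hq : ∀ i, (A i).card ≤ q) (hk : 2 ≤ k) :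
    (halfFailures A n k).ncard ≤ halfBound q (fun m => (steadyWords A m).ncard) n k := by
  have hL := ncard_sep_minErasedPos_le A (n := n) hk
  have hR := ncard_sep_lt_minErasedPos A (n := n) hq hk
  have hM := ncard_sep_minErasedPos_eq A (n := n) hk
  set L := {W ∈ halfFailures A n k | minErasedPos n W ≤ n - k}
  set R := {W ∈ halfFailures A n k | n - k + 1 < minErasedPos n W}
  set M := {W ∈ halfFailures A n k | minErasedPos n W = n - k + 1}
  have hsub : halfFailures A n k ⊆ L ∪ R ∪ M := fun W hW => by
    rcases lt_trichotomy (minErasedPos n W) (n - k + 1) with h | h | h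
    · exact .inl (.inl ⟨hW, by omega⟩)
    · exact .inr ⟨hW, h⟩
    · exact .inl (.inr ⟨hW, h⟩)
  have hfin : (L ∪ R ∪ M).Finite := (failures_finite A n).subset <|
    (Set.union_subset (Set.union_subset (Set.sep_subset _ _) (Set.sep_subset _ _))
      (Set.sep_subset _ _)).trans (Set.sep_subset _ _)
  calc (halfFailures A n k).ncard ≤ (L ∪ R ∪ M).ncard := Set.ncard_le_ncard hsub hfin
    _ ≤ L.ncard + R.ncard + M.ncard :=
      (Set.ncard_union_le _ _).trans (Nat.add_le_add_right (Set.ncard_union_le _ _) _)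
    _ ≤ _ := by rw [halfBound, add_mul]; omega

theorem ncard_failures_le_sum (n : ℕ) :
    (failures A n).ncard ≤ (squareFailures A n).ncard + (halfFailures A n 1).ncard +
      ∑ k ∈ Finset.Icc 2 (n / 2), (halfFailures A n k).ncard := by
  have hfin : (squareFailures A n ∪ halfFailures A n 1 ∪
      ⋃ k ∈ Finset.Icc 2 (n / 2), halfFailures A n k).Finite :=
    (failures_finite A n).subset <| Set.union_subset
      (Set.union_subset (Set.sep_subset _ _) (Set.sep_subset _ _))
      (Set.iUnion₂_subset fun _ _ => Set.sep_subset _ _)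
  refine (Set.ncard_le_ncard (failures_subset A) hfin).trans <| (Set.ncard_union_le _ _).trans ?_
  exact add_le_add (Set.ncard_union_le _ _) (Finset.set_ncard_biUnion_le _ _)

end Counting

theorem sum_Icc_halfBound_add_le (C : ℕ → ℕ) (n : ℕ) {K : ℕ} (hK : 2 ≤ K) :
    ∑ k ∈ Finset.Icc 2 K, halfBound 7 C n k + C (n + 1 - K) ≤
      2 * C (n - 1) + ∑ i ∈ Finset.range (K - 2), (3 + 8 * i) * C (n - 2 - i) := by
  induction K, hK using Nat.le_induction with
  | base => simp [halfBound, two_mul]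
  | succ K hK ih =>
    rw [Finset.sum_Icc_succ_top (by omega), halfBound, show K + 1 - 2 = K - 2 + 1 by omega,
      Finset.sum_range_succ, if_pos (by omega), show n + 2 - (K + 1) = n + 1 - K by omega,
      show n + 1 - (K + 1) = n - 2 - (K - 2) by omega]
    have hcoef : (K + 1 - 1 + 7 * (K + 1 - 3)) * C (n - 2 - (K - 2)) + C (n - 2 - (K - 2)) =
        (3 + 8 * (K - 2)) * C (n - 2 - (K - 2)) := by
      rw [← Nat.succ_mul, show (K + 1 - 1 + 7 * (K + 1 - 3)).succ = 3 + 8 * (K - 2) by omega]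
    omega

theorem sum_Icc_halfBound_le (C : ℕ → ℕ) (n : ℕ) :
    ∑ k ∈ Finset.Icc 2 (n / 2), halfBound 7 C n k ≤
      2 * C (n - 1) + ∑ i ∈ Finset.range (n - 1), (3 + 8 * i) * C (n - 2 - i) := by
  rcases lt_or_ge (n / 2) 2 with hn | hn
  · simp [Finset.Icc_eq_empty_of_lt hn]
  calc _ ≤ _ + C (n + 1 - n / 2) := Nat.le_add_right _ _
    _ ≤ 2 * C (n - 1) + ∑ i ∈ Finset.range (n / 2 - 2), (3 + 8 * i) * C (n - 2 - i) :=
      sum_Icc_halfBound_add_le C n hn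
    _ ≤ _ := Nat.add_le_add_left
      (Finset.sum_le_sum_of_subset (Finset.range_subset_range.mpr (by omega))) _

end Words

/-- With alphabets of size 7, if `C n` counts steady words of length `n` (letters
chosen from the respective alphabets) and `F (n+1)` counts words of length `n+1`
that are not steady but whose length-`n` prefix is steady, then
`F (n+1) ≤ 2 C n + 2 C (n-1) + ∑_{i ≥ 0} (3 + 8 i) C (n-2-i)`
(terms with negative index being zero). -/
theorem stmt17 {α : Type*} (A : ℕ → Finset α) (hA : ∀ i, (A i).card = 7)
    (C F : ℕ → ℕ)
    (hC : ∀ n, C n = {W : List α | W.length = n ∧ Steady W ∧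
      ∀ i, (h : i < W.length) → W[i] ∈ A i}.ncard)
    (hF : ∀ n, F (n + 1) = {W : List α | W.length = n + 1 ∧
      (∀ i, (h : i < W.length) → W[i] ∈ A i) ∧ ¬ Steady W ∧ Steady (W.take n)}.ncard)
    (n : ℕ) :
    F (n + 1) ≤ 2 * C n + 2 * C (n - 1) +
      ∑ i ∈ Finset.range (n - 1), (3 + 8 * i) * C (n - 2 - i) := by
  have hC' : (fun m => (steadyWords A m).ncard) = C := funext fun m => (hC m).symm
  have hhalf (k : ℕ) (hk : k ∈ Finset.Icc 2 (n / 2)) :=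
    hC' ▸ ncard_halfFailures_le A (n := n) (fun i => (hA i).le) (Finset.mem_Icc.mp hk).1
  calc F (n + 1) = (failures A n).ncard := hF n
    _ ≤ (squareFailures A n).ncard + (halfFailures A n 1).ncard +
        ∑ k ∈ Finset.Icc 2 (n / 2), (halfFailures A n k).ncard := ncard_failures_le_sum A n
    _ ≤ C n + C n + ∑ k ∈ Finset.Icc 2 (n / 2), halfBound 7 C n k := by
      rw [← congrFun hC' n]
      exact add_le_add (add_le_add (ncard_squareFailures_le A) (ncard_halfFailures_one_le A))
        (Finset.sum_le_sum hhalf)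
    _ ≤ _ := by have := sum_Icc_halfBound_le C n; omega
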